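/- arXiv:1612.00302 — 2 statements merged into one kernel-verified Lean document; each statement's English description precedes it below -/
import Mathlib

section
/- If b is a nonzero homogeneous element of A of positive degree with deg(b) < (n+1)q, then [b] is indecomposable in B := T^n(A)^{S_n}, i.e. [b] ∉ (B_+)², where B carries the grading induced from A and B_+ is its ideal of positive-degree elements. -/
/-!
Let `ε : A → A` be the projection onto degree `0` and, for `V ⊆ {1, …, n}`, let `E_V : Tⁿ(A) → A`
be the algebra map multiplying the tensor factors in `V` and applying `ε` to the others. Writing
each factor in `V` as `(a - ε a) + ε a` shows that for a symmetric tensor `x` of positive degree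
`E_V x = ∑_{s ≥ 1} (|V| choose s) γₓ(s)` with `γₓ(s) ∈ (ker ε)^s`. So, modulo `(ker ε)^(n+1)`,
`E_V (x y)` is a polynomial in `m = |V|` of degree `≤ n` divisible by `m²`. The functional
`Λ = ∑_V (-1)^(|V|+1) |V|⁻¹ E_V`, which needs `1, …, n` invertible in `K`, extracts the coefficient
of `m` of such a polynomial; hence `Λ [b] = b` while `Λ` maps `(B₊)²` into `(ker ε)^(n+1)`. As `A`
vanishes in degrees `1, …, q - 1`, elements of `(ker ε)^(n+1)` have no component of degree
`< (n+1)q`, and `b` does.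
-/

open scoped TensorProduct
open PiTensorProduct

noncomputable section

variable (K : Type*) [Field K] (A : Type*) [CommRing A] [Algebra K A] (n : ℕ)

/-- The algebra endomorphism of the `n`-th tensor power of `A` permuting the tensor
factors according to the permutation `σ` (it sends `a₁ ⊗ ⋯ ⊗ aₙ` to the tensor whose
`σ i`-th slot is `aᵢ`). -/
def permAlgHom (σ : Equiv.Perm (Fin n)) :
    (⨂[K] _ : Fin n, A) →ₐ[K] ⨂[K] _ : Fin n, A :=
  PiTensorProduct.liftAlgHom ((PiTensorProduct.tprod K).domDomCongr σ)
    (by rw [one_def]; rfl)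
    (fun x y => by
      simp only [MultilinearMap.domDomCongr_apply]
      rw [show (fun i => (x * y) (σ i)) = (fun i => x (σ i)) * fun i => y (σ i) from rfl,
        ← tprod_mul_tprod])

/-- The subalgebra `Tⁿ(A)^{Sₙ}` of `Sₙ`-invariants in the `n`-th tensor power of `A`. -/
def symInvariants : Subalgebra K (⨂[K] _ : Fin n, A) :=
  ⨅ σ : Equiv.Perm (Fin n), AlgHom.equalizer (permAlgHom K A n σ) (AlgHom.id K _)

/-- `[w] = w ⊗ 1 ⊗ ⋯ ⊗ 1 + 1 ⊗ w ⊗ 1 ⊗ ⋯ ⊗ 1 + ⋯ + 1 ⊗ ⋯ ⊗ 1 ⊗ w`. -/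
def bracket (w : A) : ⨂[K] _ : Fin n, A :=
  ∑ i : Fin n, tprod K (Function.update (fun _ : Fin n => (1 : A)) i w)

variable (𝒜 : ℕ → Submodule K A)

/-- The degree-`d` homogeneous component of the grading on `Tⁿ(A)` induced by the
grading `𝒜` of `A` (so that `deg (v₁ ⊗ ⋯ ⊗ vₙ) = deg v₁ + ⋯ + deg vₙ` for homogeneous
`vᵢ`). -/
def gradePiece (d : ℕ) : Submodule K (⨂[K] _ : Fin n, A) :=
  Submodule.span K {t | ∃ (e : Fin n → ℕ) (v : Fin n → A),
    (∀ i, v i ∈ 𝒜 (e i)) ∧ (∑ i, e i) = d ∧ t = tprod K v}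

/-- `B₊`, the ideal of positive-degree elements of `B = Tⁿ(A)^{Sₙ}`, viewed as a
`K`-submodule of `Tⁿ(A)`: the invariant elements of positive degree. -/
def posPart : Submodule K (⨂[K] _ : Fin n, A) :=
  Subalgebra.toSubmodule (symInvariants K A n) ⊓
    ⨆ d : ℕ, ⨆ _ : 0 < d, gradePiece K A n 𝒜 d

/-- `(B₊)²`, viewed as a `K`-submodule of `Tⁿ(A)`: the span of all products of two
positive-degree elements of `B = Tⁿ(A)^{Sₙ}`. -/
def posPartSq : Submodule K (⨂[K] _ : Fin n, A) :=
  Submodule.span K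
    {t | ∃ a ∈ posPart K A n 𝒜, ∃ b ∈ posPart K A n 𝒜, t = a * b}

open Finset Polynomial Nat

theorem Polynomial.sum_range_neg_one_pow_mul_choose_mul_eval {R : Type*} [CommRing R]
    {P : R[X]} {n : ℕ} (hP : P.natDegree < n) :
    ∑ m ∈ range (n + 1), (-1) ^ m * n.choose m * P.eval (m : R) = 0 := by
  have h := congrFun (fwdDiff_iter_eq_zero_of_degree_lt hP) 0
  rw [fwdDiff_iter_eq_sum_shift] at h
  calc _ = (-1) ^ n * ∑ m ∈ range (n + 1),
        ((-1 : ℤ) ^ (n - m) * n.choose m) • P.eval (0 + m • (1 : R)) := by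
        rw [mul_sum]
        refine sum_congr rfl fun m hm => ?_
        obtain ⟨k, rfl⟩ := Nat.exists_eq_add_of_le (Nat.lt_succ_iff.mp (mem_range.mp hm))
        have hk : ((-1 : R) ^ k) * (-1) ^ k = 1 := by rw [← mul_pow]; simp
        rw [Nat.add_sub_cancel_left, zsmul_eq_mul, zero_add, nsmul_one, pow_add]
        push_cast
        linear_combination (-(-1) ^ m * ((m + k).choose m : R) * P.eval (m : R)) * hk
    _ = 0 := by rw [h, Pi.zero_apply, mul_zero]

section LinearCoefficient

variable {K n}

theorem natCast_factorial_ne_zero_of_ringChar (hchar : ringChar K = 0 ∨ n < ringChar K) :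
    (n ! : K) ≠ 0 := by
  rw [Ne, ringChar.spec]
  rcases hchar with h | h
  · rw [h, zero_dvd_iff]
    exact factorial_ne_zero n
  · have hp : (ringChar K).Prime :=
      (CharP.char_is_prime_or_zero K (ringChar K)).resolve_right (by omega)
    rw [hp.dvd_factorial]
    omega

theorem natCast_ne_zero_of_dvd_factorial (hn : (n ! : K) ≠ 0) {m : ℕ} (hm : m ∣ n !) :
    (m : K) ≠ 0 :=
  ne_zero_of_dvd_ne_zero hn (Nat.cast_dvd_cast hm)

/-- `∑ m ≤ n, linearCoeffWeight n m * P m` is the coefficient of `X` in `P` whenever `P` has degree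
at most `n` and `P 0 = 0`. -/
def linearCoeffWeight (n m : ℕ) : K := (-1) ^ (m + 1) * (m : K)⁻¹ * n.choose m

theorem sum_linearCoeffWeight_mul_X_mul_eval (hn : (n ! : K) ≠ 0) {Q : K[X]}
    (hQ : Q.natDegree < n) :
    ∑ m ∈ range (n + 1), linearCoeffWeight n m * (m * Q.eval (m : K)) = Q.eval 0 := by
  have hterm : ∀ m ∈ range (n + 1), linearCoeffWeight n m * (m * Q.eval (m : K)) =
      -((-1) ^ m * n.choose m * Q.eval (m : K)) + if m = 0 then Q.eval 0 else 0 := by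
    intro m hm
    rcases Nat.eq_zero_or_pos m with rfl | hm0
    · simp [linearCoeffWeight]
    · have := natCast_ne_zero_of_dvd_factorial hn
        (Nat.dvd_factorial hm0 (Nat.lt_succ_iff.mp (mem_range.mp hm)))
      simp only [linearCoeffWeight, hm0.ne', if_false, add_zero]
      field_simp
      ring
  rw [sum_congr rfl hterm, sum_add_distrib, sum_neg_distrib,
    sum_range_neg_one_pow_mul_choose_mul_eval hQ, sum_ite_eq' (range (n + 1)) 0]
  simp

theorem sum_linearCoeffWeight_mul_self (hn : (n ! : K) ≠ 0) (hn0 : 0 < n) :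
    ∑ m ∈ range (n + 1), linearCoeffWeight n m * (m : K) = 1 := by
  simpa using sum_linearCoeffWeight_mul_X_mul_eval hn (Q := 1) (by simpa using hn0)

theorem sum_linearCoeffWeight_mul_choose_mul_choose (hn : (n ! : K) ≠ 0) {s t : ℕ}
    (hs : 0 < s) (ht : 0 < t) (hst : s + t ≤ n) :
    ∑ m ∈ range (n + 1), linearCoeffWeight n m * (m.choose s * m.choose t : K) = 0 := by
  obtain ⟨s, rfl⟩ := Nat.exists_eq_add_one_of_ne_zero hs.ne'
  -- `X * Q` is `choose X (s + 1) * choose X t`, written with falling factorials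
  set Q : K[X] := (((s + 1)! * t ! : ℕ) : K)⁻¹ •
    ((descPochhammer K s).comp (X - 1) * descPochhammer K t)
  have hQ : ∀ m : ℕ, (m : K) * Q.eval (m : K) = m.choose (s + 1) * m.choose t := by
    intro m
    have h := congrArg (eval (m : K)) (descPochhammer_succ_left K s)
    simp only [eval_mul, eval_X, eval_comp, eval_sub, eval_one] at h
    simp only [Q, eval_smul, eval_mul, eval_comp, eval_sub, eval_X, eval_one, smul_eq_mul]
    rw [← mul_assoc, ← mul_assoc, mul_comm (m : K), mul_assoc _ (m : K), ← h,
      descPochhammer_eval_eq_descFactorial, descPochhammer_eval_eq_descFactorial,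
      descFactorial_eq_factorial_mul_choose, descFactorial_eq_factorial_mul_choose]
    have h1 : ((s + 1)! : K) ≠ 0 :=
      natCast_ne_zero_of_dvd_factorial hn (factorial_dvd_factorial (by omega))
    have h2 : (t ! : K) ≠ 0 :=
      natCast_ne_zero_of_dvd_factorial hn (factorial_dvd_factorial (by omega))
    push_cast
    field_simp
  have hdeg : Q.natDegree < n := by
    calc Q.natDegree ≤ ((descPochhammer K s).comp (X - 1) * descPochhammer K t).natDegree :=
          natDegree_smul_le _ _
      _ ≤ ((descPochhammer K s).comp (X - 1)).natDegree + (descPochhammer K t).natDegree :=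
          natDegree_mul_le
      _ = s + t := by
          rw [natDegree_comp, descPochhammer_natDegree, descPochhammer_natDegree, ← C_1,
            natDegree_X_sub_C, mul_one]
      _ < n := by omega
  simp_rw [← hQ]
  rw [sum_linearCoeffWeight_mul_X_mul_eval hn hdeg]
  simp [Q, ht.ne']

variable {A}

theorem sum_linearCoeffWeight_smul_mul_mem_pow (hn : (n ! : K) ≠ 0) {I : Ideal A}
    {γ δ : ℕ → A} (hγ0 : γ 0 = 0) (hδ0 : δ 0 = 0) (hγ : ∀ s, γ s ∈ I ^ s)
    (hδ : ∀ t, δ t ∈ I ^ t) :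
    ∑ m ∈ range (n + 1), (linearCoeffWeight n m : K) •
      ((∑ s ∈ range (n + 1), m.choose s • γ s) * ∑ t ∈ range (n + 1), m.choose t • δ t) ∈
      I ^ (n + 1) := by
  have hexpand : ∑ m ∈ range (n + 1), (linearCoeffWeight n m : K) •
      ((∑ s ∈ range (n + 1), m.choose s • γ s) * ∑ t ∈ range (n + 1), m.choose t • δ t) =
      ∑ s ∈ range (n + 1), ∑ t ∈ range (n + 1),
        (∑ m ∈ range (n + 1), linearCoeffWeight n m * (m.choose s * m.choose t : K)) •
          (γ s * δ t) := by
    simp_rw [sum_mul_sum, smul_sum, sum_smul, ← Nat.cast_smul_eq_nsmul K, smul_mul_smul_comm,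
      smul_smul]
    rw [sum_comm]
    refine sum_congr rfl fun s _ => ?_
    rw [sum_comm]
  rw [hexpand]
  refine sum_mem fun s _ => sum_mem fun t _ => ?_
  rcases Nat.eq_zero_or_pos s with rfl | hs
  · simp [hγ0]
  rcases Nat.eq_zero_or_pos t with rfl | ht
  · simp [hδ0]
  by_cases hst : s + t ≤ n
  · simp [sum_linearCoeffWeight_mul_choose_mul_choose hn hs ht hst]
  · refine Submodule.smul_of_tower_mem _ _ (Ideal.pow_le_pow_right (by omega : n + 1 ≤ s + t) ?_)
    rw [pow_add]
    exact Ideal.mul_mem_mul (hγ s) (hδ t)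

end LinearCoefficient

theorem Finset.prod_mul_prod_compl_eq_sum_powerset {ι M : Type*} [Fintype ι] [DecidableEq ι]
    [CommRing M] (V : Finset ι) (a e : ι → M) :
    (∏ i ∈ V, a i) * ∏ i ∈ Vᶜ, e i =
      ∑ S ∈ V.powerset, (∏ i ∈ S, (a i - e i)) * ∏ i ∈ Sᶜ, e i := by
  calc _ = (∑ S ∈ V.powerset, (∏ i ∈ S, (a i - e i)) * ∏ i ∈ V \ S, e i) * ∏ i ∈ Vᶜ, e i := by
        rw [← prod_add]
        simp
    _ = _ := by
        rw [sum_mul]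
        refine sum_congr rfl fun S hS => ?_
        have hsub : Vᶜ ⊆ Sᶜ := compl_subset_compl.mpr (mem_powerset.mp hS)
        rw [mul_assoc, ← prod_sdiff hsub, compl_sdiff_compl]

theorem Finset.exists_perm_map_eq {ι : Type*} [Fintype ι] [DecidableEq ι] {S T : Finset ι}
    (h : S.card = T.card) : ∃ σ : Equiv.Perm ι, S.map σ.toEmbedding = T := by
  let σ := (Finset.equivOfCardEq h).extendSubtype
  refine ⟨σ, eq_of_subset_of_card_le ?_ (by simp [h])⟩
  intro y hy
  obtain ⟨x, hx, rfl⟩ := mem_map.mp hy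
  simp [σ, Equiv.extendSubtype_apply_of_mem _ x hx]

namespace PiTensorProduct

section ProdMap

variable {R ι B C : Type*} [CommRing R] [Fintype ι] [CommRing B] [Algebra R B]
  [CommRing C] [Algebra R C]

def prodMap (f : ι → B →ₗ[R] C) : (⨂[R] _ : ι, B) →ₗ[R] C :=
  lift ((MultilinearMap.mkPiAlgebra R ι C).compLinearMap f)

@[simp]
theorem prodMap_tprod (f : ι → B →ₗ[R] C) (v : ι → B) :
    prodMap f (tprod R v) = ∏ i, f i (v i) := by
  simp [prodMap]

def prodAlgHom (f : ι → B →ₐ[R] C) : (⨂[R] _ : ι, B) →ₐ[R] C :=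
  liftAlgHom ((MultilinearMap.mkPiAlgebra R ι C).compLinearMap fun i => (f i).toLinearMap)
    (by simp) fun x y => by simp [prod_mul_distrib]

theorem prodAlgHom_apply (f : ι → B →ₐ[R] C) (x : ⨂[R] _ : ι, B) :
    prodAlgHom f x = prodMap (fun i => (f i).toLinearMap) x :=
  rfl

@[simp]
theorem prodAlgHom_tprod (f : ι → B →ₐ[R] C) (v : ι → B) :
    prodAlgHom f (tprod R v) = ∏ i, f i (v i) := by
  simp [prodAlgHom_apply]

end ProdMap

section Augmentation

variable {R ι B : Type*} [CommRing R] [Fintype ι] [DecidableEq ι] [CommRing B] [Algebra R B]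
  (ε : B →ₐ[R] B)

def augProd (V : Finset ι) : (⨂[R] _ : ι, B) →ₐ[R] B :=
  prodAlgHom (V.piecewise (fun _ => AlgHom.id R B) fun _ => ε)

def augProdExact (S : Finset ι) : (⨂[R] _ : ι, B) →ₗ[R] B :=
  prodMap (S.piecewise (fun _ => LinearMap.id - ε.toLinearMap) fun _ => ε.toLinearMap)

theorem augProd_tprod (V : Finset ι) (v : ι → B) :
    augProd ε V (tprod R v) = (∏ i ∈ V, v i) * ∏ i ∈ Vᶜ, ε (v i) := by
  rw [augProd, prodAlgHom_tprod, ← prod_mul_prod_compl V]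
  congr 1 <;> refine prod_congr rfl fun i hi => ?_ <;> simp_all

theorem augProdExact_tprod (S : Finset ι) (v : ι → B) :
    augProdExact ε S (tprod R v) = (∏ i ∈ S, (v i - ε (v i))) * ∏ i ∈ Sᶜ, ε (v i) := by
  rw [augProdExact, prodMap_tprod, ← prod_mul_prod_compl S]
  congr 1 <;> refine prod_congr rfl fun i hi => ?_ <;> simp_all

theorem augProd_eq_sum_augProdExact (V : Finset ι) (z : ⨂[R] _ : ι, B) :
    augProd ε V z = ∑ S ∈ V.powerset, augProdExact ε S z := by
  suffices (augProd ε V).toLinearMap = ∑ S ∈ V.powerset, augProdExact ε S from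
    by simpa using LinearMap.congr_fun this z
  ext v
  simp only [LinearMap.compMultilinearMap_apply, AlgHom.toLinearMap_apply, augProd_tprod,
    LinearMap.coe_sum, Finset.sum_apply, augProdExact_tprod]
  exact prod_mul_prod_compl_eq_sum_powerset V v (fun i => ε (v i))

theorem augProdExact_mem_pow_ker (hε : ∀ b, ε (ε b) = ε b) (S : Finset ι)
    (z : ⨂[R] _ : ι, B) : augProdExact ε S z ∈ RingHom.ker ε ^ S.card := by
  induction z using PiTensorProduct.induction_on with
  | smul_tprod r v =>
    rw [map_smul, augProdExact_tprod]
    refine Submodule.smul_of_tower_mem _ r (Ideal.mul_mem_right _ _ ?_)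
    rw [← prod_const]
    exact Ideal.prod_mem_prod fun i _ => by simp [RingHom.mem_ker, hε]
  | add x y hx hy =>
    rw [map_add]
    exact add_mem hx hy

end Augmentation

end PiTensorProduct

section Symmetric

open PiTensorProduct

variable {K A n}

theorem permAlgHom_tprod (σ : Equiv.Perm (Fin n)) (v : Fin n → A) :
    permAlgHom K A n σ (tprod K v) = tprod K fun i => v (σ i) := by
  simp [permAlgHom]

theorem mem_symInvariants_iff {x : ⨂[K] _ : Fin n, A} :
    x ∈ symInvariants K A n ↔ ∀ σ, permAlgHom K A n σ x = x := by
  simp [symInvariants, Algebra.mem_iInf, AlgHom.mem_equalizer]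

theorem prodMap_permAlgHom {C : Type*} [CommRing C] [Algebra K C] (f : Fin n → A →ₗ[K] C)
    (σ : Equiv.Perm (Fin n)) (z : ⨂[K] _ : Fin n, A) :
    prodMap f (permAlgHom K A n σ z) = prodMap (fun i => f (σ.symm i)) z := by
  suffices (prodMap f).comp (permAlgHom K A n σ).toLinearMap =
      prodMap (fun i => f (σ.symm i)) from LinearMap.congr_fun this z
  ext v
  simp only [LinearMap.compMultilinearMap_apply, LinearMap.comp_apply, AlgHom.toLinearMap_apply,
    permAlgHom_tprod, prodMap_tprod]
  rw [← Equiv.prod_comp σ fun j => f (σ.symm j) (v j)]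
  simp

variable (ε : A →ₐ[K] A)

theorem augProdExact_permAlgHom (σ : Equiv.Perm (Fin n)) (S : Finset (Fin n))
    (z : ⨂[K] _ : Fin n, A) :
    augProdExact ε S (permAlgHom K A n σ z) = augProdExact ε (S.map σ.toEmbedding) z := by
  rw [augProdExact, prodMap_permAlgHom, augProdExact]
  congr 2
  ext i : 1
  by_cases hi : σ.symm i ∈ S <;> simp [hi, Finset.mem_map_equiv]

theorem augProdExact_eq_of_card_eq {x : ⨂[K] _ : Fin n, A} (hx : x ∈ symInvariants K A n)
    {S T : Finset (Fin n)} (h : S.card = T.card) :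
    augProdExact ε S x = augProdExact ε T x := by
  obtain ⟨σ, rfl⟩ := Finset.exists_perm_map_eq h
  rw [← augProdExact_permAlgHom, mem_symInvariants_iff.mp hx]

theorem exists_augProd_eq_sum_choose_smul (hε : ∀ b, ε (ε b) = ε b)
    {x : ⨂[K] _ : Fin n, A} (hx : x ∈ symInvariants K A n) (hx0 : augProd ε ∅ x = 0) :
    ∃ γ : ℕ → A, γ 0 = 0 ∧ (∀ s, γ s ∈ RingHom.ker ε ^ s) ∧
      ∀ V, augProd ε V x = ∑ s ∈ range (n + 1), V.card.choose s • γ s := by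
  classical
  let γ : ℕ → A := fun s =>
    if h : ∃ S : Finset (Fin n), S.card = s then augProdExact ε h.choose x else 0
  have hγ : ∀ S, augProdExact ε S x = γ S.card := fun S => by
    have h : ∃ T : Finset (Fin n), T.card = S.card := ⟨S, rfl⟩
    simp only [γ, dif_pos h]
    exact augProdExact_eq_of_card_eq ε hx h.choose_spec.symm
  refine ⟨γ, ?_, fun s => ?_, fun V => ?_⟩
  · rw [← card_empty, ← hγ, ← hx0, augProd_eq_sum_augProdExact, powerset_empty, sum_singleton]
  · by_cases h : ∃ S : Finset (Fin n), S.card = s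
    · obtain ⟨S, rfl⟩ := h
      rw [← hγ]
      exact augProdExact_mem_pow_ker ε hε S x
    · simp [γ, h]
  · rw [augProd_eq_sum_augProdExact, sum_congr rfl fun S _ => hγ S, sum_powerset_apply_card]
    have hV : V.card ≤ n := by simpa using card_le_univ V
    refine sum_subset (range_subset_range.mpr (by omega)) fun s hs hs' => ?_
    rw [mem_range] at hs hs'
    rw [choose_eq_zero_of_lt (by omega), zero_smul]

def linearCoeffFunctional : (⨂[K] _ : Fin n, A) →ₗ[K] A :=
  ∑ V : Finset (Fin n), ((-1) ^ (V.card + 1) * (V.card : K)⁻¹) • (augProd ε V).toLinearMap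

theorem linearCoeffFunctional_apply_of_augProd_eq {z : ⨂[K] _ : Fin n, A} {F : ℕ → A}
    (h : ∀ V, augProd ε V z = F V.card) :
    linearCoeffFunctional ε z = ∑ m ∈ range (n + 1), (linearCoeffWeight n m : K) • F m := by
  simp only [linearCoeffFunctional, LinearMap.coe_sum, Finset.sum_apply, LinearMap.smul_apply,
    AlgHom.toLinearMap_apply, h]
  rw [← powerset_univ, sum_powerset_apply_card (fun m => ((-1) ^ (m + 1) * (m : K)⁻¹) • F m),
    Finset.card_fin]
  refine sum_congr rfl fun m _ => ?_
  rw [← Nat.cast_smul_eq_nsmul K, smul_smul, linearCoeffWeight, mul_comm]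

theorem augProd_bracket {b : A} (hb : ε b = 0) (V : Finset (Fin n)) :
    augProd ε V (bracket K A n b) = V.card • b := by
  have hterm : ∀ i, augProd ε V (tprod K (Function.update (fun _ => (1 : A)) i b)) =
      if i ∈ V then b else 0 := by
    intro i
    rw [augProd_tprod]
    by_cases hi : i ∈ V
    · rw [prod_update_of_mem hi, if_pos hi, prod_eq_one (s := Vᶜ) fun j hj => by
        rw [Function.update_of_ne (by rintro rfl; exact mem_compl.1 hj hi), map_one]]
      simp
    · rw [if_neg hi, prod_eq_zero (mem_compl.2 hi) (by simp [hb]), mul_zero]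
  rw [bracket, map_sum, sum_congr rfl fun i _ => hterm i, sum_ite_mem, univ_inter, sum_const]

theorem linearCoeffFunctional_bracket (hn : (n ! : K) ≠ 0) (hn0 : 0 < n) {b : A}
    (hb : ε b = 0) : linearCoeffFunctional ε (bracket K A n b) = b := by
  rw [linearCoeffFunctional_apply_of_augProd_eq ε (F := fun m => m • b) (augProd_bracket ε hb)]
  simp_rw [← Nat.cast_smul_eq_nsmul K, smul_smul, ← sum_smul,
    sum_linearCoeffWeight_mul_self hn hn0, one_smul]

theorem linearCoeffFunctional_mul_mem_pow_ker (hn : (n ! : K) ≠ 0)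
    (hε : ∀ b, ε (ε b) = ε b) {x y : ⨂[K] _ : Fin n, A}
    (hx : x ∈ symInvariants K A n) (hx0 : augProd ε ∅ x = 0)
    (hy : y ∈ symInvariants K A n) (hy0 : augProd ε ∅ y = 0) :
    linearCoeffFunctional ε (x * y) ∈ RingHom.ker ε ^ (n + 1) := by
  obtain ⟨γ, hγ0, hγ, hxγ⟩ := exists_augProd_eq_sum_choose_smul ε hε hx hx0
  obtain ⟨δ, hδ0, hδ, hyδ⟩ := exists_augProd_eq_sum_choose_smul ε hε hy hy0
  rw [linearCoeffFunctional_apply_of_augProd_eq ε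
    (F := fun m => (∑ s ∈ range (n + 1), m.choose s • γ s) * ∑ t ∈ range (n + 1), m.choose t • δ t)
    fun V => by rw [map_mul, hxγ, hyδ]]
  exact sum_linearCoeffWeight_smul_mul_mem_pow hn hγ0 hδ0 hγ hδ

end Symmetric

section Graded

open PiTensorProduct DirectSum

variable {K A n 𝒜} [GradedAlgebra 𝒜]

variable (𝒜) in
def projZeroAlgHom : A →ₐ[K] A :=
  { GradedRing.projZeroRingHom 𝒜 with
    commutes' := fun c => decompose_of_mem_same 𝒜 (SetLike.algebraMap_mem_graded 𝒜 c) }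

theorem projZeroAlgHom_projZeroAlgHom (a : A) :
    projZeroAlgHom 𝒜 (projZeroAlgHom 𝒜 a) = projZeroAlgHom 𝒜 a :=
  decompose_of_mem_same 𝒜 (SetLike.coe_mem _)

theorem projZeroAlgHom_eq_zero_of_mem {a : A} {d : ℕ} (ha : a ∈ 𝒜 d) (hd : d ≠ 0) :
    projZeroAlgHom 𝒜 a = 0 :=
  decompose_of_mem_ne 𝒜 ha hd

theorem augProd_empty_eq_zero_of_mem_iSup_gradePiece {x : ⨂[K] _ : Fin n, A}
    (hx : x ∈ ⨆ d : ℕ, ⨆ _ : 0 < d, gradePiece K A n 𝒜 d) :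
    augProd (projZeroAlgHom 𝒜) ∅ x = 0 := by
  suffices ⨆ d : ℕ, ⨆ _ : 0 < d, gradePiece K A n 𝒜 d ≤
      LinearMap.ker (augProd (projZeroAlgHom 𝒜) ∅).toLinearMap from this hx
  refine iSup₂_le fun d hd => Submodule.span_le.mpr ?_
  rintro _ ⟨e, v, hv, hsum, rfl⟩
  obtain ⟨i, hi⟩ : ∃ i, e i ≠ 0 := by
    by_contra! h
    simp [h] at hsum
    omega
  simp only [SetLike.mem_coe, LinearMap.mem_ker, AlgHom.toLinearMap_apply, augProd_tprod]
  exact mul_eq_zero_of_right _ (prod_eq_zero (by simp) (projZeroAlgHom_eq_zero_of_mem (hv i) hi))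

theorem coe_decompose_mul_eq_sum_antidiagonal (a b : A) (j : ℕ) :
    (decompose 𝒜 (a * b) j : A) =
      ∑ p ∈ antidiagonal j, (decompose 𝒜 a p.1 : A) * decompose 𝒜 b p.2 := by
  rw [decompose_mul, coe_mul_apply_eq_sum_antidiagonal]

variable (𝒜) in
def degreeGeIdeal (r : ℕ) : Ideal A where
  carrier := {a | ∀ j < r, (decompose 𝒜 a j : A) = 0}
  add_mem' ha hb j hj := by simp [ha j hj, hb j hj]
  zero_mem' j _ := by simp
  smul_mem' c a ha j hj := by
    rw [smul_eq_mul, coe_decompose_mul_eq_sum_antidiagonal]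
    refine sum_eq_zero fun p hp => ?_
    rw [ha p.2 (by rw [HasAntidiagonal.mem_antidiagonal] at hp; omega), mul_zero]

theorem degreeGeIdeal_mul_le (r s : ℕ) :
    degreeGeIdeal 𝒜 r * degreeGeIdeal 𝒜 s ≤ degreeGeIdeal 𝒜 (r + s) := by
  refine Ideal.mul_le.mpr fun a ha b hb j hj => ?_
  rw [coe_decompose_mul_eq_sum_antidiagonal]
  refine sum_eq_zero fun p hp => ?_
  rw [HasAntidiagonal.mem_antidiagonal] at hp
  by_cases h : p.1 < r
  · rw [ha _ h, zero_mul]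
  · rw [hb _ (by omega), mul_zero]

theorem pow_le_degreeGeIdeal {I : Ideal A} {q : ℕ} (hI : I ≤ degreeGeIdeal 𝒜 q) (k : ℕ) :
    I ^ k ≤ degreeGeIdeal 𝒜 (q * k) := by
  induction k with
  | zero => exact fun a _ j hj => absurd hj (by omega)
  | succ k ih =>
    rw [pow_succ, mul_add, mul_one]
    exact (Ideal.mul_mono ih hI).trans (degreeGeIdeal_mul_le _ _)

theorem ker_projZeroAlgHom_le_degreeGeIdeal {q : ℕ} (hqmin : ∀ d, 0 < d → d < q → 𝒜 d = ⊥) :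
    RingHom.ker (projZeroAlgHom 𝒜) ≤ degreeGeIdeal 𝒜 q := by
  intro a ha j hj
  rcases Nat.eq_zero_or_pos j with rfl | hj0
  · exact ha
  · simpa [hqmin j hj0 hj] using (decompose 𝒜 a j).2

theorem notMem_degreeGeIdeal {b : A} {d r : ℕ} (hbd : b ∈ 𝒜 d) (hb : b ≠ 0) (hdr : d < r) :
    b ∉ degreeGeIdeal 𝒜 r := fun h =>
  hb ((decompose_of_mem_same 𝒜 hbd).symm.trans (h d hdr))

end Graded

theorem bracket_indecomposable [GradedAlgebra 𝒜]
    (hchar : ringChar K = 0 ∨ n < ringChar K)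
    (q : ℕ)
    (hqmin : ∀ d, 0 < d → d < q → 𝒜 d = ⊥)
    (b : A) (hb : b ≠ 0) (d : ℕ) (hd0 : 0 < d) (hdlt : d < (n + 1) * q)
    (hbd : b ∈ 𝒜 d) :
    bracket K A n b ∉ posPartSq K A n 𝒜 := by
  have hn0 : 0 < n := by
    by_contra! hn
    obtain rfl : n = 0 := by omega
    exact hb (by simpa [hqmin d hd0 (by omega)] using hbd)
  have hn := natCast_factorial_ne_zero_of_ringChar (n := n) hchar
  let ε := projZeroAlgHom 𝒜
  have hsq : posPartSq K A n 𝒜 ≤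
      ((RingHom.ker ε ^ (n + 1)).restrictScalars K).comap (linearCoeffFunctional ε) := by
    refine Submodule.span_le.mpr ?_
    rintro _ ⟨x, ⟨hx, hx0⟩, y, ⟨hy, hy0⟩, rfl⟩
    exact linearCoeffFunctional_mul_mem_pow_ker ε hn projZeroAlgHom_projZeroAlgHom hx
      (augProd_empty_eq_zero_of_mem_iSup_gradePiece hx0) hy
      (augProd_empty_eq_zero_of_mem_iSup_gradePiece hy0)
  intro hmem
  have h := hsq hmem
  rw [Submodule.mem_comap, linearCoeffFunctional_bracket ε hn hn0
    (projZeroAlgHom_eq_zero_of_mem hbd hd0.ne')] at h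
  exact notMem_degreeGeIdeal hbd hb (by rwa [mul_comm] at hdlt)
    (pow_le_degreeGeIdeal (ker_projZeroAlgHom_le_degreeGeIdeal hqmin) (n + 1) h)

end
end

section
/- The subalgebra of H-invariants R^H is generated as a K-algebra by the seven elements x_1, x_2, x_3, z_1², z_2², z_3², z_1z_2z_3. -/
noncomputable section

open MvPolynomial

/-- The set of two-element subsets of `{1,2,3,4}` (modelled as non-diagonal unordered
pairs of elements of `Fin 4`), indexing the variables of the polynomial ring `R`. -/
abbrev PairIdx : Type := {p : Sym2 (Fin 4) // ¬ p.IsDiag}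

/-- The two-element subset `{i, j}`. -/
def pr (i j : Fin 4) (h : i ≠ j) : PairIdx := ⟨s(i, j), by simp [Sym2.mk_isDiag_iff, h]⟩

/-- The permutation of two-element subsets induced by a permutation `σ` of `{1,2,3,4}`. -/
def pairPerm (σ : Equiv.Perm (Fin 4)) : Equiv.Perm PairIdx :=
  Equiv.subtypeEquiv
    { toFun := Sym2.map σ
      invFun := Sym2.map σ.symm
      left_inv := fun p => by
        rw [show Sym2.map σ.symm (Sym2.map σ p) = Sym2.map (σ.symm ∘ σ) p by
          rw [Sym2.map_comp]; rfl]
        simp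
      right_inv := fun p => by
        rw [show Sym2.map σ (Sym2.map σ.symm p) = Sym2.map (σ ∘ σ.symm) p by
          rw [Sym2.map_comp]; rfl]
        simp }
    (fun p => not_congr (Sym2.isDiag_map σ.injective).symm)

variable (K : Type*) [Field K]

/-- `R := K[x_{{i,j}}]`, the six-variable polynomial ring on the variables indexed by
the two-element subsets of `{1,2,3,4}`. -/
abbrev R4 : Type _ := MvPolynomial PairIdx K

/-- The action of `σ ∈ S₄` on `R`, `σ · x_{{i,j}} = x_{{σ(i),σ(j)}}`, as a `K`-algebra
homomorphism. -/
def actS4 (σ : Equiv.Perm (Fin 4)) : R4 K →ₐ[K] R4 K := rename (pairPerm σ)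

/-- The invariant subalgebra `R^{S₄}`. -/
def S4Inv : Subalgebra K (R4 K) :=
  ⨅ σ : Equiv.Perm (Fin 4), AlgHom.equalizer (actS4 K σ) (AlgHom.id K (R4 K))

/-- `x₁ = x_{{1,2}} + x_{{3,4}}`, `x₂ = x_{{1,3}} + x_{{2,4}}`, `x₃ = x_{{1,4}} + x_{{2,3}}`
(vertices renamed `1,2,3,4 → 0,1,2,3`). -/
def xg : Fin 3 → R4 K :=
  ![X (pr 0 1 (by decide)) + X (pr 2 3 (by decide)),
    X (pr 0 2 (by decide)) + X (pr 1 3 (by decide)),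
    X (pr 0 3 (by decide)) + X (pr 1 2 (by decide))]

/-- `z₁ = x_{{1,2}} − x_{{3,4}}`, `z₂ = x_{{1,3}} − x_{{2,4}}`, `z₃ = x_{{1,4}} − x_{{2,3}}`. -/
def zg : Fin 3 → R4 K :=
  ![X (pr 0 1 (by decide)) - X (pr 2 3 (by decide)),
    X (pr 0 2 (by decide)) - X (pr 1 3 (by decide)),
    X (pr 0 3 (by decide)) - X (pr 1 2 (by decide))]

/-- `[x^a z^{2b}] := Σ_{i=1}^{3} x_i^a z_i^{2b}`. -/
def pSum (a b : ℕ) : R4 K := ∑ i : Fin 3, xg K i ^ a * zg K i ^ (2 * b)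

/-- The Klein four subgroup `H = {id, (12)(34), (13)(24), (14)(23)}` of `S₄`
(vertices renamed `1,2,3,4 → 0,1,2,3`). -/
def klein : Set (Equiv.Perm (Fin 4)) :=
  {1, Equiv.swap 0 1 * Equiv.swap 2 3, Equiv.swap 0 2 * Equiv.swap 1 3,
    Equiv.swap 0 3 * Equiv.swap 1 2}

/-- The subalgebra `R^H` of `H`-invariants. -/
def HInv : Subalgebra K (R4 K) :=
  ⨅ σ ∈ klein, AlgHom.equalizer (actS4 K σ) (AlgHom.id K (R4 K))


/-! For `2 ≠ 0` the ring `R` is generated by `x₁, x₂, x₃, z₁, z₂, z₃`, and each nontrivial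
element of `H` fixes the `xᵢ`, fixes one `zᵢ` and negates the other two. Let `A` be the algebra
generated by the seven elements. As `zᵢ² ∈ A`, `R` is spanned as an `A`-module by the products
`z_s = ∏_{i ∈ s} zᵢ`, `s ⊆ {1, 2, 3}`. The Reynolds operator `ρ = Σ_{σ ∈ H} σ` is `A`-linear,
kills `z_s` unless `s = ∅` or `s = {1, 2, 3}`, and maps these two into `A`. Hence `ρ(R) ⊆ A`,
and every invariant `p` lies in `A` since `ρ(p) = 4p`. -/

open Finset

theorem Algebra.adjoin_range_eq_span_prod_of_sq_mem {A S ι : Type*} [CommSemiring A]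
    [CommSemiring S] [Algebra A S] [DecidableEq ι] (z : ι → S)
    (hz : ∀ i, z i ^ 2 ∈ Set.range (algebraMap A S)) :
    Subalgebra.toSubmodule (Algebra.adjoin A (Set.range z)) =
      Submodule.span A (Set.range fun s : Finset ι => ∏ i ∈ s, z i) := by
  refine le_antisymm ?_ ?_
  · rw [Algebra.adjoin_eq_span, Submodule.span_le]
    intro m hm
    obtain ⟨a, s, rfl⟩ : ∃ (a : A) (s : Finset ι), a • ∏ i ∈ s, z i = m := by
      induction hm using Submonoid.closure_induction_left with
      | one => exact ⟨1, ∅, by simp⟩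
      | mul_left _ hx y _ ih =>
        obtain ⟨i, rfl⟩ := hx
        obtain ⟨a, s, rfl⟩ := ih
        by_cases hi : i ∈ s
        · obtain ⟨b, hb⟩ := hz i
          refine ⟨b * a, s.erase i, ?_⟩
          rw [← Finset.mul_prod_erase s z hi, mul_smul, Algebra.smul_def b, hb,
            mul_smul_comm, mul_smul_comm, ← mul_assoc, sq]
        · exact ⟨a, insert i s, by rw [Finset.prod_insert hi, mul_smul_comm]⟩
    exact Submodule.smul_mem _ a (Submodule.subset_span ⟨s, rfl⟩)
  · rw [Submodule.span_le]
    rintro _ ⟨s, rfl⟩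
    exact Subalgebra.prod_mem _ fun i _ => Algebra.subset_adjoin ⟨i, rfl⟩

def kleinPerm : Fin 3 → Equiv.Perm (Fin 4) :=
  ![Equiv.swap 0 1 * Equiv.swap 2 3, Equiv.swap 0 2 * Equiv.swap 1 3,
    Equiv.swap 0 3 * Equiv.swap 1 2]

def pairA : Fin 3 → PairIdx := ![pr 0 1 (by decide), pr 0 2 (by decide), pr 0 3 (by decide)]

def pairB : Fin 3 → PairIdx := ![pr 2 3 (by decide), pr 1 3 (by decide), pr 1 2 (by decide)]

def kleinGens : Set (R4 K) :=
  {xg K 0, xg K 1, xg K 2, zg K 0 ^ 2, zg K 1 ^ 2, zg K 2 ^ 2, zg K 0 * zg K 1 * zg K 2}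

def zProd (s : Finset (Fin 3)) : R4 K := ∏ k ∈ s, zg K k

def reynolds : R4 K →ₗ[K] R4 K :=
  LinearMap.id + ∑ i, (actS4 K (kleinPerm i)).toLinearMap

section

variable {K}

lemma xg_eq (k : Fin 3) : xg K k = X (pairA k) + X (pairB k) := by
  fin_cases k <;> rfl

lemma zg_eq (k : Fin 3) : zg K k = X (pairA k) - X (pairB k) := by
  fin_cases k <;> rfl

lemma exists_eq_pairA_or_pairB (p : PairIdx) : ∃ k, p = pairA k ∨ p = pairB k := by
  revert p; decide

lemma pairPerm_kleinPerm_pairA (i k : Fin 3) :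
    pairPerm (kleinPerm i) (pairA k) = if i = k then pairA k else pairB k := by
  revert i k; decide

lemma pairPerm_kleinPerm_pairB (i k : Fin 3) :
    pairPerm (kleinPerm i) (pairB k) = if i = k then pairB k else pairA k := by
  revert i k; decide

lemma actS4_one : actS4 K 1 = AlgHom.id K (R4 K) := by
  have : pairPerm 1 = 1 := by
    ext p
    simp [pairPerm]
  simp [actS4, this]

lemma actS4_kleinPerm_xg (i k : Fin 3) : actS4 K (kleinPerm i) (xg K k) = xg K k := by
  rw [xg_eq, map_add, actS4, rename_X, rename_X, pairPerm_kleinPerm_pairA,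
    pairPerm_kleinPerm_pairB]
  split_ifs
  · rfl
  · exact add_comm _ _

lemma actS4_kleinPerm_zg (i k : Fin 3) :
    actS4 K (kleinPerm i) (zg K k) = (if i = k then 1 else -1) * zg K k := by
  rw [zg_eq, map_sub, actS4, rename_X, rename_X, pairPerm_kleinPerm_pairA,
    pairPerm_kleinPerm_pairB]
  split_ifs <;> ring

lemma actS4_kleinPerm_zProd (i : Fin 3) (s : Finset (Fin 3)) :
    actS4 K (kleinPerm i) (zProd K s) = (-1) ^ #(s.erase i) * zProd K s := by
  simp_rw [zProd, map_prod, actS4_kleinPerm_zg, prod_mul_distrib, prod_ite, prod_const_one,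
    one_mul, prod_const, filter_ne]

lemma zProd_univ : zProd K univ = zg K 0 * zg K 1 * zg K 2 := by
  simp [zProd, Fin.prod_univ_three]

lemma mem_HInv_iff {p : R4 K} : p ∈ HInv K ↔ ∀ i, actS4 K (kleinPerm i) p = p := by
  simp [HInv, Algebra.mem_iInf, klein, AlgHom.mem_equalizer, actS4_one, Fin.forall_fin_succ,
    kleinPerm]

lemma kleinGens_subset_HInv : kleinGens K ⊆ HInv K := by
  have hsq (i k : Fin 3) : actS4 K (kleinPerm i) (zg K k ^ 2) = zg K k ^ 2 := by
    rw [map_pow, actS4_kleinPerm_zg]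
    split_ifs <;> ring
  have hprod (i : Fin 3) :
      actS4 K (kleinPerm i) (zg K 0 * zg K 1 * zg K 2) = zg K 0 * zg K 1 * zg K 2 := by
    rw [← zProd_univ, actS4_kleinPerm_zProd, card_erase_of_mem (mem_univ i)]
    simp
  simp only [kleinGens, Set.insert_subset_iff, Set.singleton_subset_iff, SetLike.mem_coe,
    mem_HInv_iff]
  exact ⟨(actS4_kleinPerm_xg · 0), (actS4_kleinPerm_xg · 1), (actS4_kleinPerm_xg · 2),
    (hsq · 0), (hsq · 1), (hsq · 2), hprod⟩

lemma xg_mem_adjoin_kleinGens (k : Fin 3) : xg K k ∈ Algebra.adjoin K (kleinGens K) := by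
  apply Algebra.subset_adjoin
  fin_cases k <;> simp only [kleinGens, Fin.reduceFinMk, Set.mem_insert_iff,
    Set.mem_singleton_iff, true_or, or_true]

lemma zg_sq_mem_adjoin_kleinGens (k : Fin 3) : zg K k ^ 2 ∈ Algebra.adjoin K (kleinGens K) := by
  apply Algebra.subset_adjoin
  fin_cases k <;> simp only [kleinGens, Fin.reduceFinMk, Set.mem_insert_iff,
    Set.mem_singleton_iff, true_or, or_true]

lemma X_pairA_eq (h2 : (2 : K) ≠ 0) (k : Fin 3) :
    (X (pairA k) : R4 K) = (2⁻¹ : K) • (xg K k + zg K k) := by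
  rw [xg_eq, zg_eq, add_add_sub_cancel, ← two_smul K, smul_smul, inv_mul_cancel₀ h2, one_smul]

lemma X_pairB_eq (h2 : (2 : K) ≠ 0) (k : Fin 3) :
    (X (pairB k) : R4 K) = (2⁻¹ : K) • (xg K k - zg K k) := by
  rw [xg_eq, zg_eq, add_sub_sub_cancel, ← two_smul K, smul_smul, inv_mul_cancel₀ h2, one_smul]

lemma adjoin_xg_zg_eq_top (h2 : (2 : K) ≠ 0) :
    Algebra.adjoin K (Set.range (xg K) ∪ Set.range (zg K)) = ⊤ := by
  rw [eq_top_iff, ← adjoin_range_X, Algebra.adjoin_le_iff]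
  rintro _ ⟨p, rfl⟩
  have hx k : xg K k ∈ Algebra.adjoin K (Set.range (xg K) ∪ Set.range (zg K)) :=
    Algebra.subset_adjoin (Or.inl ⟨k, rfl⟩)
  have hz k : zg K k ∈ Algebra.adjoin K (Set.range (xg K) ∪ Set.range (zg K)) :=
    Algebra.subset_adjoin (Or.inr ⟨k, rfl⟩)
  obtain ⟨k, rfl | rfl⟩ := exists_eq_pairA_or_pairB p
  · rw [SetLike.mem_coe, X_pairA_eq h2]
    exact Subalgebra.smul_mem _ (add_mem (hx k) (hz k)) _
  · rw [SetLike.mem_coe, X_pairB_eq h2]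
    exact Subalgebra.smul_mem _ (sub_mem (hx k) (hz k)) _

lemma span_zProd_eq_top (h2 : (2 : K) ≠ 0) :
    Submodule.span (Algebra.adjoin K (kleinGens K)) (Set.range (zProd K)) = ⊤ := by
  set A := Algebra.adjoin K (kleinGens K)
  have hsq (k : Fin 3) : zg K k ^ 2 ∈ Set.range (algebraMap A (R4 K)) :=
    ⟨⟨_, zg_sq_mem_adjoin_kleinGens k⟩, rfl⟩
  have htop : Algebra.adjoin A (Set.range (zg K)) = ⊤ := by
    refine Subalgebra.restrictScalars_injective K ?_
    rw [Subalgebra.restrictScalars_top, eq_top_iff, ← adjoin_xg_zg_eq_top h2,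
      Algebra.adjoin_le_iff]
    rintro _ (⟨k, rfl⟩ | ⟨k, rfl⟩) <;> rw [SetLike.mem_coe, Subalgebra.mem_restrictScalars]
    · exact Subalgebra.algebraMap_mem _ (⟨_, xg_mem_adjoin_kleinGens k⟩ : A)
    · exact Algebra.subset_adjoin ⟨k, rfl⟩
  change Submodule.span A (Set.range fun s => ∏ k ∈ s, zg K k) = ⊤
  rw [← Algebra.adjoin_range_eq_span_prod_of_sq_mem _ hsq, htop, Algebra.top_toSubmodule]

lemma reynolds_apply (p : R4 K) : reynolds K p = p + ∑ i, actS4 K (kleinPerm i) p := by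
  simp [reynolds]

lemma reynolds_of_mem_HInv {p : R4 K} (hp : p ∈ HInv K) : reynolds K p = (4 : K) • p := by
  simp_rw [reynolds_apply, mem_HInv_iff.1 hp, sum_const, card_univ, Fintype.card_fin]
  module

lemma reynolds_mul_of_mem_HInv {a : R4 K} (ha : a ∈ HInv K) (p : R4 K) :
    reynolds K (a * p) = a * reynolds K p := by
  simp_rw [reynolds_apply, map_mul, mem_HInv_iff.1 ha, mul_add, mul_sum]

lemma reynolds_zProd (s : Finset (Fin 3)) :
    reynolds K (zProd K s) = ((1 + ∑ i, (-1 : ℤ) ^ #(s.erase i) : ℤ) : R4 K) * zProd K s := by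
  simp [reynolds_apply, actS4_kleinPerm_zProd, add_mul, sum_mul]

lemma reynolds_mem_adjoin_of_mem {p : R4 K} (hp : p ∈ Algebra.adjoin K (kleinGens K)) :
    reynolds K p ∈ Algebra.adjoin K (kleinGens K) := by
  rw [reynolds_of_mem_HInv (Algebra.adjoin_le kleinGens_subset_HInv hp)]
  exact Subalgebra.smul_mem _ hp _

lemma reynolds_zProd_mem_adjoin (s : Finset (Fin 3)) :
    reynolds K (zProd K s) ∈ Algebra.adjoin K (kleinGens K) := by
  -- the sign character of `zProd K s` is trivial only for `s = ∅` and `s = univ`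
  rcases (by decide : ∀ s : Finset (Fin 3),
      s = ∅ ∨ s = univ ∨ 1 + ∑ i, (-1 : ℤ) ^ #(s.erase i) = 0) s with rfl | rfl | hs
  · exact reynolds_mem_adjoin_of_mem (by simp [zProd, one_mem])
  · rw [zProd_univ]
    exact reynolds_mem_adjoin_of_mem (Algebra.subset_adjoin (by simp [kleinGens]))
  · rw [reynolds_zProd, hs, Int.cast_zero, zero_mul]
    exact zero_mem _

lemma reynolds_mem_adjoin (h2 : (2 : K) ≠ 0) (p : R4 K) :
    reynolds K p ∈ Algebra.adjoin K (kleinGens K) := by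
  have hp : p ∈ Submodule.span (Algebra.adjoin K (kleinGens K)) (Set.range (zProd K)) := by
    rw [span_zProd_eq_top h2]
    trivial
  induction hp using Submodule.span_induction with
  | mem _ h =>
    obtain ⟨s, rfl⟩ := h
    exact reynolds_zProd_mem_adjoin s
  | zero => simp
  | add _ _ _ _ h h' => rw [map_add]; exact add_mem h h'
  | smul a _ _ h =>
    rw [Subalgebra.smul_def, smul_eq_mul,
      reynolds_mul_of_mem_HInv (Algebra.adjoin_le kleinGens_subset_HInv a.2)]
    exact mul_mem a.2 h

end

/-- Let `K` be a field of characteristic `0` or `> 3`.  The subalgebra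
`R^H` of `H`-invariants is generated as a `K`-algebra by the seven elements
`x₁, x₂, x₃, z₁², z₂², z₃², z₁z₂z₃`. -/
theorem HInv_generated_by_seven
    (hchar : ringChar K = 0 ∨ 3 < ringChar K) :
    Algebra.adjoin K
      {xg K 0, xg K 1, xg K 2, zg K 0 ^ 2, zg K 1 ^ 2, zg K 2 ^ 2,
        zg K 0 * zg K 1 * zg K 2}
      = HInv K := by
  change Algebra.adjoin K (kleinGens K) = HInv K
  have h2 : (2 : K) ≠ 0 := Ring.two_ne_zero (by omega)
  have h4 : (4 : K) ≠ 0 := by simpa [show (4 : K) = 2 * 2 by norm_num] using mul_ne_zero h2 h2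
  refine le_antisymm (Algebra.adjoin_le kleinGens_subset_HInv) fun p hp => ?_
  have h4p := reynolds_mem_adjoin h2 p
  rw [reynolds_of_mem_HInv hp] at h4p
  simpa [smul_smul, inv_mul_cancel₀ h4] using Subalgebra.smul_mem _ h4p (4⁻¹ : K)

end
end
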